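/- Under the ideal setup (V = Θ̃ Π Θ̃(I,I)^{-1} V(I,:), V'V = I_K, Π a rank-K membership matrix with pure index tuple I so Π(I,:) = I_K, Θ̃ diagonal with diagonal entries in [θ̃_min, θ̃_max], θ̃_min > 0, every row of V nonzero, V(I,:) invertible), one has the entrywise inequality (V_{*,1}(I,:) V_{*,1}(I,:)')^{-1} ≥ (θ̃_min⁴ / (θ̃_max⁴ · K · λ₁(Π'Π))) · Π'Π, and consequently η := min_{1≤k≤K} ((V_{*,1}(I,:) V_{*,1}(I,:)')^{-1} 𝟏)(k) ≥ θ̃_min⁴ · π_min / (θ̃_max⁴ · K · λ₁(Π'Π)), where π_min = min_{1≤k≤K} Σ_{i=1}^n Π(i,k) and λ₁(Π'Π) is the largest eigenvalue of Π'Π. -/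

import Mathlib

open Matrix

/-- The Euclidean norm of a row vector. -/
noncomputable def rnorm {m : ℕ} (v : Fin m → ℝ) : ℝ := Real.sqrt (∑ j, v j ^ 2)

/-- Row-wise ℓ₂-normalization of a matrix. -/
noncomputable def rowNormalize {n m : ℕ} (V : Matrix (Fin n) (Fin m) ℝ) :
    Matrix (Fin n) (Fin m) ℝ :=
  Matrix.of fun i j => V i j / rnorm (V i)

/-! Write `A = V(I,:)`, `g = Θ̃(I,I)⁻¹` and `S = Π' Θ̃² Π`. Orthonormality of the columns of
`V = Θ̃ Π g A` says `A' (g S g) A = 1`, i.e. `(A A')⁻¹ = g S g`; normalizing the rows of `A`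
conjugates this by `diag ‖A(k,:)‖`, so `(V₊(I,:) V₊(I,:)')⁻¹ = E S E` with
`E = diag (‖A(k,:)‖ / θ̃(I k))`.

By Cauchy–Schwarz, `P(k,k) P⁻¹(k,k) ≥ 1` for `P = A A'`, so the diagonal of `E S E` is `≥ 1`; as
`S(k,k) ≤ θ̃_max² λ₁(Π'Π)`, this forces `E(k) E(l) ≥ 1 / (θ̃_max² λ₁)`, and with
`S ≥ θ̃_min² Π'Π` entrywise we get `E S E ≥ θ̃_min² / (θ̃_max² λ₁) · Π'Π`, which is stronger than
the claimed bound by the factor `θ̃_max² K / θ̃_min² ≥ 1`. Finally `Π'Π 𝟏 = Π' 𝟏` is the vector of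
community sizes, which gives the bound on `η`. -/

lemma inv_le_mul_of_one_le_sq_mul {R : Type*} [Field R] [LinearOrder R] [IsStrictOrderedRing R]
    {x y c : R} (hx : 0 ≤ x) (hy : 0 ≤ y) (hxc : 1 ≤ x ^ 2 * c) (hyc : 1 ≤ y ^ 2 * c) :
    c⁻¹ ≤ x * y := by
  have hc : 0 < c := by
    by_contra! hc
    nlinarith [mul_nonpos_of_nonneg_of_nonpos (sq_nonneg x) hc]
  rw [inv_le_iff_one_le_mul₀' hc, ← one_le_pow_iff_of_nonneg (by positivity) two_ne_zero]
  calc (1 : R) ≤ (x ^ 2 * c) * (y ^ 2 * c) := one_le_mul_of_one_le_of_one_le hxc hyc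
    _ = (c * (x * y)) ^ 2 := by ring

lemma pow_four_div_mul_le_sq {R : Type*} [Field R] [LinearOrder R] [IsStrictOrderedRing R]
    {a b K : R} (ha : 0 < a) (hab : a ≤ b) (hK : 1 ≤ K) :
    a ^ 4 / (b ^ 2 * K) ≤ a ^ 2 := by
  have hab2 : a ^ 2 ≤ b ^ 2 * K := calc
    a ^ 2 ≤ b ^ 2 := pow_le_pow_left₀ ha.le hab 2
    _ ≤ b ^ 2 * K := le_mul_of_one_le_right (sq_nonneg _) hK
  rw [div_le_iff₀ (hab2.trans_lt' (by positivity))]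
  nlinarith [sq_nonneg a]

namespace Matrix

lemma transpose_mul_self_apply_nonneg {m ι R : Type*} [Fintype m] [CommSemiring R]
    [PartialOrder R] [IsOrderedRing R] {P : Matrix m ι R} (hP : ∀ i k, 0 ≤ P i k) (k l : ι) :
    0 ≤ (Pᵀ * P) k l := by
  rw [mul_apply]
  exact Finset.sum_nonneg fun i _ => mul_nonneg (hP i k) (hP i l)

variable {n : Type*} [Fintype n] [DecidableEq n]

lemma IsHermitian.re_apply_self_le_iSup_eigenvalues {𝕜 : Type*} [RCLike 𝕜] {M : Matrix n n 𝕜}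
    (hM : M.IsHermitian) (k : n) : RCLike.re (M k k) ≤ ⨆ j, hM.eigenvalues j := by
  set U : Matrix n n 𝕜 := (hM.eigenvectorUnitary : Matrix n n 𝕜)
  have hUrow : ∑ j, ‖U k j‖ ^ 2 = 1 := by
    have := congrFun (congrFun (Unitary.coe_mul_star_self hM.eigenvectorUnitary) k) k
    simp only [Unitary.coe_star, mul_apply, star_apply, RCLike.star_def, RCLike.mul_conj,
      one_apply_eq] at this
    exact_mod_cast this
  have hMkk : RCLike.re (M k k) = ∑ j, hM.eigenvalues j * ‖U k j‖ ^ 2 := by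
    conv_lhs => rw [hM.spectral_theorem]
    simp only [Unitary.conjStarAlgAut_apply, mul_apply, diagonal_apply]
    simp [U, RCLike.norm_sq_eq_def, mul_add, mul_comm, mul_left_comm]
  calc RCLike.re (M k k) = ∑ j, hM.eigenvalues j * ‖U k j‖ ^ 2 := hMkk
    _ ≤ ∑ j, (⨆ i, hM.eigenvalues i) * ‖U k j‖ ^ 2 := by
      gcongr with j
      exact le_ciSup (Set.finite_range _).bddAbove j
    _ = ⨆ i, hM.eigenvalues i := by rw [← Finset.mul_sum, hUrow, mul_one]

lemma inv_mul_transpose_eq_of_transpose_mul_mul_eq_one {R : Type*} [CommRing R]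
    {A M : Matrix n n R} (h : Aᵀ * M * A = 1) : (A * Aᵀ)⁻¹ = M := by
  have hright : A * (Aᵀ * M) = 1 := mul_eq_one_comm.mp h
  exact inv_eq_right_inv (by rw [Matrix.mul_assoc, hright])

lemma one_le_mul_transpose_apply_mul_inv_apply {R : Type*} [Field R] [LinearOrder R]
    [IsStrictOrderedRing R] {A : Matrix n n R} (hA : IsUnit A) (k : n) :
    1 ≤ (A * Aᵀ) k k * (A * Aᵀ)⁻¹ k k := by
  have hAA : ∑ j, A k j * A⁻¹ j k = 1 := by
    simpa [mul_apply] using congrFun (congrFun (mul_nonsing_inv A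
      ((isUnit_iff_isUnit_det A).mp hA)) k) k
  calc (1 : R) = (∑ j, A k j * A⁻¹ j k) ^ 2 := by rw [hAA, one_pow]
    _ ≤ (∑ j, A k j ^ 2) * ∑ j, A⁻¹ j k ^ 2 := Finset.sum_mul_sq_le_sq_mul_sq _ _ _
    _ = _ := by rw [mul_inv_rev, ← transpose_nonsing_inv]; simp [mul_apply, sq]

lemma row_ne_zero_of_isUnit {R : Type*} [CommRing R] [Nontrivial R] {A : Matrix n n R}
    (hA : IsUnit A) (i : n) : A i ≠ 0 := fun h =>
  ((isUnit_iff_isUnit_det A).mp hA).ne_zero (det_eq_zero_of_row_eq_zero i (by simp [h]))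

variable {ι : Type*} {R : Type*}

lemma transpose_mul_diagonal_mul_apply [CommSemiring R] (P : Matrix n ι R) (w : n → R)
    (k l : ι) : (Pᵀ * diagonal w * P) k l = ∑ i, w i * (P i k * P i l) := by
  rw [mul_apply]
  simp only [mul_diagonal, transpose_apply]
  exact Finset.sum_congr rfl fun i _ => by ring

lemma inv_mul_transpose_eq_of_transpose_mul_self_eq_one [CommRing R] [Fintype ι]
    [DecidableEq ι] (θ : n → R) (P : Matrix n ι R) (g : ι → R) (A : Matrix ι ι R)
    (h : (diagonal θ * P * (diagonal g * A))ᵀ * (diagonal θ * P * (diagonal g * A)) = 1) :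
    (A * Aᵀ)⁻¹ = diagonal g * (Pᵀ * diagonal (fun i => θ i ^ 2) * P) * diagonal g := by
  have hθ2 : diagonal (fun i => θ i ^ 2) = diagonal θ * diagonal θ := by
    rw [diagonal_mul_diagonal]; simp only [sq]
  apply inv_mul_transpose_eq_of_transpose_mul_mul_eq_one
  rw [hθ2, ← h]
  simp only [transpose_mul, diagonal_transpose, Matrix.mul_assoc]

variable [CommSemiring R] [PartialOrder R] [IsOrderedRing R] {P : Matrix n ι R}

lemma le_transpose_mul_diagonal_mul_apply (hP : ∀ i k, 0 ≤ P i k) {w : n → R} {c : R}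
    (hc : ∀ i, c ≤ w i) (k l : ι) : c * (Pᵀ * P) k l ≤ (Pᵀ * diagonal w * P) k l := by
  rw [transpose_mul_diagonal_mul_apply, mul_apply]
  simp only [transpose_apply, Finset.mul_sum]
  exact Finset.sum_le_sum fun i _ =>
    mul_le_mul_of_nonneg_right (hc i) (mul_nonneg (hP i k) (hP i l))

lemma transpose_mul_diagonal_mul_apply_le (hP : ∀ i k, 0 ≤ P i k) {w : n → R} {c : R}
    (hc : ∀ i, w i ≤ c) (k l : ι) : (Pᵀ * diagonal w * P) k l ≤ c * (Pᵀ * P) k l := by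
  rw [transpose_mul_diagonal_mul_apply, mul_apply]
  simp only [transpose_apply, Finset.mul_sum]
  exact Finset.sum_le_sum fun i _ =>
    mul_le_mul_of_nonneg_right (hc i) (mul_nonneg (hP i k) (hP i l))

end Matrix

lemma rnorm_pos {m : ℕ} {v : Fin m → ℝ} (hv : v ≠ 0) : 0 < rnorm v := by
  obtain ⟨j, hj⟩ := Function.ne_iff.mp hv
  exact Real.sqrt_pos.mpr
    (Finset.sum_pos' (fun _ _ => sq_nonneg _) ⟨j, Finset.mem_univ _, even_two.pow_pos hj⟩)

lemma rnorm_sq {m : ℕ} (v : Fin m → ℝ) : rnorm v ^ 2 = ∑ j, v j ^ 2 :=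
  Real.sq_sqrt (Finset.sum_nonneg fun _ _ => sq_nonneg _)

lemma rowNormalize_eq_diagonal_mul {n m : ℕ} (A : Matrix (Fin n) (Fin m) ℝ) :
    rowNormalize A = diagonal (fun i => (rnorm (A i))⁻¹) * A := by
  ext i j
  simp [rowNormalize, diagonal_mul, div_eq_inv_mul]

lemma inv_rowNormalize_mul_transpose {n m : ℕ} {A : Matrix (Fin n) (Fin m) ℝ}
    (hA : ∀ i, A i ≠ 0) :
    (rowNormalize A * (rowNormalize A)ᵀ)⁻¹ =
      diagonal (fun i => rnorm (A i)) * (A * Aᵀ)⁻¹ * diagonal (fun i => rnorm (A i)) := by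
  have hinv : (diagonal fun i => (rnorm (A i))⁻¹)⁻¹ = diagonal fun i => rnorm (A i) := by
    refine inv_eq_left_inv ?_
    rw [diagonal_mul_diagonal, ← diagonal_one]
    exact congrArg diagonal (funext fun i => mul_inv_cancel₀ (rnorm_pos (hA i)).ne')
  rw [rowNormalize_eq_diagonal_mul, transpose_mul, diagonal_transpose]
  set D := diagonal fun i => (rnorm (A i))⁻¹
  rw [show D * A * (Aᵀ * D) = D * (A * Aᵀ) * D by simp only [Matrix.mul_assoc],
    Matrix.mul_inv_rev, Matrix.mul_inv_rev, hinv, Matrix.mul_assoc]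

lemma one_le_inv_rowNormalize_mul_transpose_apply_self {K : ℕ}
    {A : Matrix (Fin K) (Fin K) ℝ} (hA : IsUnit A) (k : Fin K) :
    1 ≤ (rowNormalize A * (rowNormalize A)ᵀ)⁻¹ k k := by
  have hnorm : rnorm (A k) * rnorm (A k) = (A * Aᵀ) k k := by
    rw [← sq, rnorm_sq, mul_apply]; simp [sq]
  calc 1 ≤ (A * Aᵀ) k k * (A * Aᵀ)⁻¹ k k := one_le_mul_transpose_apply_mul_inv_apply hA k
    _ = rnorm (A k) * (A * Aᵀ)⁻¹ k k * rnorm (A k) := by rw [← hnorm]; ring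
    _ = _ := by
      rw [inv_rowNormalize_mul_transpose (row_ne_zero_of_isUnit hA)]
      simp [diagonal_mul, mul_diagonal]

lemma inv_rowNormalize_mul_transpose_apply_of_transpose_mul_self_eq_one {n K : ℕ}
    (θ : Fin n → ℝ) (P : Matrix (Fin n) (Fin K) ℝ) (g : Fin K → ℝ)
    {A : Matrix (Fin K) (Fin K) ℝ} (hA : IsUnit A)
    (h : (diagonal θ * P * (diagonal g * A))ᵀ * (diagonal θ * P * (diagonal g * A)) = 1)
    (k l : Fin K) :
    (rowNormalize A * (rowNormalize A)ᵀ)⁻¹ k l =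
      rnorm (A k) * g k * (Pᵀ * diagonal (fun i => θ i ^ 2) * P) k l * (rnorm (A l) * g l) := by
  rw [inv_rowNormalize_mul_transpose (row_ne_zero_of_isUnit hA),
    inv_mul_transpose_eq_of_transpose_mul_self_eq_one θ P g A h]
  simp only [mul_diagonal, diagonal_mul]
  ring

lemma div_mul_le_mul_apply_mul_of_one_le_diag {ι R : Type*} [Field R] [LinearOrder R]
    [IsStrictOrderedRing R] {S P : ι → ι → R} {e : ι → R} {a Λ : R} (he : ∀ k, 0 ≤ e k)
    (hdiag : ∀ k, 1 ≤ e k * S k k * e k) (hS : ∀ k, S k k ≤ Λ)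
    (hPS : ∀ k l, a * P k l ≤ S k l) (haP : ∀ k l, 0 ≤ a * P k l) (k l : ι) :
    a / Λ * P k l ≤ e k * S k l * e l := by
  have hsq : ∀ k, 1 ≤ e k ^ 2 * Λ := fun k =>
    calc 1 ≤ e k * S k k * e k := hdiag k
      _ = e k ^ 2 * S k k := by ring
      _ ≤ e k ^ 2 * Λ := mul_le_mul_of_nonneg_left (hS k) (sq_nonneg _)
  calc a / Λ * P k l = Λ⁻¹ * (a * P k l) := by ring
    _ ≤ (e k * e l) * (a * P k l) :=
      mul_le_mul_of_nonneg_right (inv_le_mul_of_one_le_sq_mul (he k) (he l) (hsq k) (hsq l))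
        (haP k l)
    _ ≤ (e k * e l) * S k l := mul_le_mul_of_nonneg_left (hPS k l) (mul_nonneg (he k) (he l))
    _ = e k * S k l * e l := by ring

lemma mul_iInf_sum_le_iInf_mulVec_one {m ι : Type*} [Fintype m] [Fintype ι] [Nonempty ι]
    {P : Matrix m ι ℝ} (hP : ∀ i, ∑ k, P i k = 1) {X : Matrix ι ι ℝ} {c : ℝ} (hc : 0 ≤ c)
    (hX : ∀ k l, c * (Pᵀ * P) k l ≤ X k l) :
    c * ⨅ k, ∑ i, P i k ≤ ⨅ k, (X *ᵥ fun _ => 1) k := by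
  have hcol : (Pᵀ * P) *ᵥ (fun _ => 1) = Pᵀ *ᵥ fun _ => 1 := by
    rw [← mulVec_mulVec]
    congr 1
    exact funext fun i => by simp [mulVec, dotProduct, hP]
  refine le_ciInf fun k => ?_
  calc c * ⨅ k, ∑ i, P i k ≤ c * ∑ i, P i k :=
        mul_le_mul_of_nonneg_left (ciInf_le (Set.finite_range _).bddBelow k) hc
    _ = ∑ l, c * (Pᵀ * P) k l := by
        rw [← Finset.mul_sum]
        simpa [mulVec, dotProduct] using congrArg (c * · k) hcol.symm
    _ ≤ ∑ l, X k l := Finset.sum_le_sum fun l _ => hX k l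
    _ = (X *ᵥ fun _ => 1) k := by simp [mulVec, dotProduct]

lemma le_inv_gram_rowNormalize_submatrix_apply {n K : ℕ} {Pim : Matrix (Fin n) (Fin K) ℝ}
    (hnonneg : ∀ i k, 0 ≤ Pim i k) {I : Fin K → Fin n} {θ : Fin n → ℝ} {θmin θmax : ℝ}
    (hθmin : 0 < θmin) (hθ : ∀ i, θmin ≤ θ i ∧ θ i ≤ θmax) {V : Matrix (Fin n) (Fin K) ℝ}
    (hVorth : Vᵀ * V = 1)
    (hVdef : V = diagonal θ * Pim * (diagonal (fun k => (θ (I k))⁻¹) * V.submatrix I id))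
    (hVI : IsUnit (V.submatrix I id)) (hH : (Pimᵀ * Pim).IsHermitian) (k l : Fin K) :
    θmin ^ 4 / (θmax ^ 4 * K * ⨆ j, hH.eigenvalues j) * (Pimᵀ * Pim) k l ≤
      ((rowNormalize V).submatrix I id * ((rowNormalize V).submatrix I id)ᵀ)⁻¹ k l := by
  set A := V.submatrix I id
  set S := Pimᵀ * diagonal (fun i => θ i ^ 2) * Pim
  set e : Fin K → ℝ := fun k => rnorm (A k) * (θ (I k))⁻¹
  set Λ := ⨆ j, hH.eigenvalues j
  have hθpos : ∀ i, 0 < θ i := fun i => hθmin.trans_le (hθ i).1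
  have hX : ∀ k l, (rowNormalize A * (rowNormalize A)ᵀ)⁻¹ k l = e k * S k l * e l :=
    inv_rowNormalize_mul_transpose_apply_of_transpose_mul_self_eq_one θ Pim _ hVI
      (hVdef ▸ hVorth)
  have hSdiag : ∀ k, S k k ≤ θmax ^ 2 * Λ := fun k =>
    (transpose_mul_diagonal_mul_apply_le hnonneg
      (fun i => pow_le_pow_left₀ (hθpos i).le (hθ i).2 2) k k).trans
      (mul_le_mul_of_nonneg_left (by simpa using hH.re_apply_self_le_iSup_eigenvalues k)
        (sq_nonneg _))
  have hSlow : ∀ k l, θmin ^ 4 / (θmax ^ 2 * K) * (Pimᵀ * Pim) k l ≤ S k l :=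
    le_transpose_mul_diagonal_mul_apply hnonneg fun i =>
      (pow_four_div_mul_le_sq hθmin ((hθ (I k)).1.trans (hθ (I k)).2)
        (by exact_mod_cast k.pos)).trans (pow_le_pow_left₀ hθmin.le (hθ i).1 2)
  calc θmin ^ 4 / (θmax ^ 4 * K * Λ) * (Pimᵀ * Pim) k l
      = θmin ^ 4 / (θmax ^ 2 * K) / (θmax ^ 2 * Λ) * (Pimᵀ * Pim) k l := by ring
    _ ≤ e k * S k l * e l := div_mul_le_mul_apply_mul_of_one_le_diag
        (fun k => mul_nonneg (Real.sqrt_nonneg _) (inv_nonneg.mpr (hθpos _).le))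
        (fun k => hX k k ▸ one_le_inv_rowNormalize_mul_transpose_apply_self hVI k) hSdiag
        hSlow (fun k l => mul_nonneg (by positivity) (transpose_mul_self_apply_nonneg hnonneg k l))
        k l
    _ = _ := (hX k l).symm

theorem eta_lower_bound_general {n K : ℕ} (hK : 1 ≤ K)
    (Pim : Matrix (Fin n) (Fin K) ℝ)
    (hnonneg : ∀ i k, 0 ≤ Pim i k)
    (hrowsum : ∀ i, ∑ k, Pim i k = 1)
    (I : Fin K → Fin n)
    (θ : Fin n → ℝ) (θmin θmax : ℝ) (hθmin : 0 < θmin)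
    (hθ : ∀ i, θmin ≤ θ i ∧ θ i ≤ θmax)
    (V : Matrix (Fin n) (Fin K) ℝ)
    (hVorth : Vᵀ * V = 1)
    (hVdef : V = Matrix.diagonal θ * Pim *
      (Matrix.diagonal (fun k => (θ (I k))⁻¹) * V.submatrix I id))
    (hVI : IsUnit (V.submatrix I id))
    (hH : (Pimᵀ * Pim).IsHermitian) :
    let Vc := (rowNormalize V).submatrix I id
    (∀ k l, θmin ^ 4 / (θmax ^ 4 * K * ⨆ j, hH.eigenvalues j) * (Pimᵀ * Pim) k l ≤
      (Vc * Vcᵀ)⁻¹ k l) ∧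
    θmin ^ 4 * (⨅ k, ∑ i, Pim i k) / (θmax ^ 4 * K * ⨆ j, hH.eigenvalues j) ≤
      ⨅ k, ((Vc * Vcᵀ)⁻¹ *ᵥ fun _ => (1 : ℝ)) k := by
  intro Vc
  have hentry := le_inv_gram_rowNormalize_submatrix_apply hnonneg hθmin hθ hVorth hVdef hVI hH
  refine ⟨hentry, ?_⟩
  have : Nonempty (Fin K) := ⟨⟨0, hK⟩⟩
  have hΛ : 0 ≤ ⨆ j, hH.eigenvalues j := (transpose_mul_self_apply_nonneg hnonneg _ _).trans
    (by simpa using hH.re_apply_self_le_iSup_eigenvalues ⟨0, hK⟩)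
  rw [mul_div_right_comm]
  exact mul_iInf_sum_le_iInf_mulVec_one hrowsum (by positivity) hentry

/-- **lower bound for `η`.** Under the ideal setup, the entrywise inequality
`(V₊(I,:) V₊(I,:)')⁻¹ ≥ (θmin⁴/(θmax⁴·K·λ₁(Π'Π)))·Π'Π` holds, and consequently
`η = min_k ((V₊(I,:) V₊(I,:)')⁻¹ 𝟏)(k) ≥ θmin⁴·π_min/(θmax⁴·K·λ₁(Π'Π))`, where
`π_min = min_k Σ_i Π(i,k)` and `λ₁(Π'Π)` is the largest eigenvalue of `Π'Π`. -/
theorem eta_lower_bound {n K : ℕ} (hK : 1 ≤ K) (hKn : K ≤ n)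
    (Pim : Matrix (Fin n) (Fin K) ℝ)
    (hnonneg : ∀ i k, 0 ≤ Pim i k)
    (hrowsum : ∀ i, ∑ k, Pim i k = 1)
    (hrank : Pim.rank = K)
    (I : Fin K → Fin n)
    (hpure : ∀ k l, Pim (I k) l = if l = k then (1 : ℝ) else 0)
    (θ : Fin n → ℝ) (θmin θmax : ℝ) (hθmin : 0 < θmin)
    (hθ : ∀ i, θmin ≤ θ i ∧ θ i ≤ θmax)
    (V : Matrix (Fin n) (Fin K) ℝ)
    (hVorth : Vᵀ * V = 1)
    (hVdef : V = Matrix.diagonal θ * Pim *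
      (Matrix.diagonal (fun k => (θ (I k))⁻¹) * V.submatrix I id))
    (hrows : ∀ i, V i ≠ 0)
    (hVI : IsUnit (V.submatrix I id))
    (hH : (Pimᵀ * Pim).IsHermitian) :
    let Vc := (rowNormalize V).submatrix I id
    (∀ k l, θmin ^ 4 / (θmax ^ 4 * K * ⨆ j, hH.eigenvalues j) * (Pimᵀ * Pim) k l ≤
      (Vc * Vcᵀ)⁻¹ k l) ∧
    θmin ^ 4 * (⨅ k, ∑ i, Pim i k) / (θmax ^ 4 * K * ⨆ j, hH.eigenvalues j) ≤
      ⨅ k, ((Vc * Vcᵀ)⁻¹ *ᵥ fun _ => (1 : ℝ)) k :=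
  eta_lower_bound_general hK Pim hnonneg hrowsum I θ θmin θmax hθmin hθ V hVorth hVdef hVI hH
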